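/- arXiv:2110.14621 — 2 statements merged into one kernel-verified Lean document; each statement's English description precedes it below -/
import Mathlib

section
/- Under the hypotheses of the sequence lemma (z₁ = 0 and z_{t+1} ≤ z_t + (2/(T−t))·√z_t·(√K/max(√(t−1),1) + sqrt(A₁·e^{−A₂(T−t+1)} + B₁·e^{−B₂t} + C₁·T^{1/2}·e^{−C₂·T^{1/2}})) + 16/(T−t)² for 1 ≤ t ≤ T−1), with M̄ := 4√K + 2·sqrt(2A₁/(e·A₂) + B₁/(e·B₂) + 27C₁/(e³·C₂³)) and N̄ := 4·max(M̄², 256), the following invariants hold: z_t ≤ N̄·t/(T−t)² for all 1 ≤ t ≤ T/2, and z_t ≤ N̄/(T−t) for all T/2 < t ≤ T−1. -/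
set_option maxHeartbeats 1000000


lemma exp_neg_le_inv' {x : ℝ} (hx : 0 < x) :
    Real.exp (-x) ≤ 1 / (Real.exp 1 * x) := by
  have h1 : x ≤ Real.exp (x - 1) := by
    have := Real.add_one_le_exp (x - 1); linarith
  have h2 : Real.exp 1 * x ≤ Real.exp x := by
    calc Real.exp 1 * x ≤ Real.exp 1 * Real.exp (x - 1) :=
          mul_le_mul_of_nonneg_left h1 (Real.exp_pos 1).le
      _ = Real.exp x := by rw [← Real.exp_add]; ring_nf
  rw [Real.exp_neg, ← one_div]
  exact one_div_le_one_div_of_le (by positivity) h2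

lemma exp_neg_le_cube' {x : ℝ} (hx : 0 < x) :
    Real.exp (-x) ≤ 27 / (Real.exp 1 ^ 3 * x ^ 3) := by
  have h1 : x / 3 ≤ Real.exp (x / 3 - 1) := by
    have := Real.add_one_le_exp (x / 3 - 1); linarith
  have h2 : (x / 3) ^ 3 ≤ Real.exp (x / 3 - 1) ^ 3 :=
    pow_le_pow_left₀ (by positivity) h1 3
  have h3 : Real.exp (x / 3 - 1) ^ 3 = Real.exp (x - 3) := by
    rw [← Real.exp_nat_mul]
    congr 1; push_cast; ring
  have h4 : x ^ 3 / 27 ≤ Real.exp (x - 3) := by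
    calc x ^ 3 / 27 = (x / 3) ^ 3 := by ring
      _ ≤ Real.exp (x / 3 - 1) ^ 3 := h2
      _ = Real.exp (x - 3) := h3
  have h5 : Real.exp (x - 3) = Real.exp x / Real.exp 1 ^ 3 := by
    rw [Real.exp_sub]
    congr 1
    rw [show (3:ℝ) = ((3:ℕ):ℝ) * 1 by norm_num, Real.exp_nat_mul]
  rw [h5] at h4
  rw [Real.exp_neg, ← one_div, div_le_div_iff₀ (Real.exp_pos x) (by positivity)]
  have h6 := (div_le_div_iff₀ (by norm_num : (0:ℝ) < 27) (pow_pos (Real.exp_pos 1) 3)).mp h4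
  nlinarith




/-- Invariants in the proof of the sequence lemma:
`z_t ≤ N̄·t/(T−t)²` for `1 ≤ t ≤ T/2` and `z_t ≤ N̄/(T−t)` for
`T/2 < t ≤ T−1`, where `M̄ = 4√K + 2√(2A₁/(eA₂) + B₁/(eB₂) + 27C₁/(e³C₂³))`
and `N̄ = 4·max(M̄², 256)`. -/
theorem sequence_recursion_invariants
    (T : ℕ) (hT : 2 ≤ T)
    (K A₁ A₂ B₁ B₂ C₁ C₂ : ℝ)
    (hK : 0 < K) (hA₁ : 0 < A₁) (hA₂ : 0 < A₂) (hB₁ : 0 < B₁) (hB₂ : 0 < B₂)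
    (hC₁ : 0 < C₁) (hC₂ : 0 < C₂)
    (z : ℕ → ℝ) (hz : ∀ t, 0 ≤ z t) (hz1 : z 1 = 0)
    (hrec : ∀ t : ℕ, 1 ≤ t → t ≤ T - 1 →
      z (t + 1) ≤ z t + (2 / ((T : ℝ) - (t : ℝ))) * Real.sqrt (z t) *
        (Real.sqrt K / max (Real.sqrt ((t : ℝ) - 1)) 1 +
         Real.sqrt (A₁ * Real.exp (-A₂ * ((T : ℝ) - (t : ℝ) + 1)) +
           B₁ * Real.exp (-B₂ * (t : ℝ)) +
           C₁ * Real.sqrt T * Real.exp (-C₂ * Real.sqrt T)))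
        + 16 / ((T : ℝ) - (t : ℝ)) ^ 2) :
    (∀ t : ℕ, 1 ≤ t → 2 * t ≤ T →
      z t ≤ (4 * max ((4 * Real.sqrt K +
          2 * Real.sqrt (2 * A₁ / (Real.exp 1 * A₂) + B₁ / (Real.exp 1 * B₂) +
            27 * C₁ / (Real.exp 1 ^ 3 * C₂ ^ 3))) ^ 2) 256) *
        (t : ℝ) / ((T : ℝ) - (t : ℝ)) ^ 2) ∧
    (∀ t : ℕ, T < 2 * t → t ≤ T - 1 →
      z t ≤ (4 * max ((4 * Real.sqrt K +
          2 * Real.sqrt (2 * A₁ / (Real.exp 1 * A₂) + B₁ / (Real.exp 1 * B₂) +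
            27 * C₁ / (Real.exp 1 ^ 3 * C₂ ^ 3))) ^ 2) 256) /
        ((T : ℝ) - (t : ℝ))) := by
  set D : ℝ := 2 * A₁ / (Real.exp 1 * A₂) + B₁ / (Real.exp 1 * B₂) +
      27 * C₁ / (Real.exp 1 ^ 3 * C₂ ^ 3) with hDdef
  set M : ℝ := 4 * Real.sqrt K + 2 * Real.sqrt D with hMdef
  set N : ℝ := 4 * max (M ^ 2) 256 with hNdef
  clear_value D M N
  have hD : 0 < D := by
    rw [hDdef]; positivity
  have hM : 0 < M := by
    rw [hMdef]; positivity
  have hN : 0 < N := by rw [hNdef]; positivity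
  have hN1024 : 1024 ≤ N := by
    have : (256:ℝ) ≤ max (M ^ 2) 256 := le_max_right _ _
    rw [hNdef]; linarith
  have hsN : Real.sqrt N * Real.sqrt N = N := Real.mul_self_sqrt hN.le
  have hMsN : 2 * M ≤ Real.sqrt N := by
    have h1 : Real.sqrt (M ^ 2) ≤ Real.sqrt (max (M ^ 2) 256) :=
      Real.sqrt_le_sqrt (le_max_left _ _)
    rw [Real.sqrt_sq hM.le] at h1
    have h2 : Real.sqrt N = 2 * Real.sqrt (max (M ^ 2) 256) := by
      rw [hNdef, show (4 : ℝ) * max (M ^ 2) 256 = 2 ^ 2 * max (M ^ 2) 256 by norm_num,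
        Real.sqrt_mul (by norm_num), Real.sqrt_sq (by norm_num)]
    rw [h2]; linarith
  have hMN2 : Real.sqrt N * M ≤ N / 2 := by
    have h1 : 0 ≤ Real.sqrt N * (Real.sqrt N - 2 * M) :=
      mul_nonneg (Real.sqrt_nonneg N) (by linarith)
    nlinarith
  have hTR : (2:ℝ) ≤ (T:ℝ) := by exact_mod_cast hT
  -- bracket bound
  have hbr : ∀ (t : ℕ) (u : ℝ), 1 ≤ t → t ≤ T - 1 → 1 ≤ u → u ≤ (t : ℝ) →
      u ≤ (T : ℝ) - (t : ℝ) →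
      Real.sqrt K / max (Real.sqrt ((t : ℝ) - 1)) 1 +
        Real.sqrt (A₁ * Real.exp (-A₂ * ((T : ℝ) - (t : ℝ) + 1)) +
          B₁ * Real.exp (-B₂ * (t : ℝ)) +
          C₁ * Real.sqrt T * Real.exp (-C₂ * Real.sqrt T)) ≤ (M / 2) / Real.sqrt u := by
    intro t u ht1 htT hu1 hut hua
    have htR : (1:ℝ) ≤ (t:ℝ) := by exact_mod_cast ht1
    have htT' : (t:ℝ) + 1 ≤ (T:ℝ) := by
      have : t + 1 ≤ T := by omega
      exact_mod_cast this
    have hu0 : 0 < u := lt_of_lt_of_le one_pos hu1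
    have hsu : 0 < Real.sqrt u := Real.sqrt_pos.mpr hu0
    have hTpos : (0:ℝ) < (T:ℝ) := by linarith
    have hsT : 0 < Real.sqrt (T:ℝ) := Real.sqrt_pos.mpr hTpos
    -- part 1 : sqrt K term
    have hmax1 : (1:ℝ) ≤ max (Real.sqrt ((t:ℝ) - 1)) 1 := le_max_right _ _
    have hmax0 : (0:ℝ) < max (Real.sqrt ((t:ℝ) - 1)) 1 := lt_of_lt_of_le one_pos hmax1
    have hst : Real.sqrt (t:ℝ) ≤ Real.sqrt ((t:ℝ) - 1) + 1 := by
      have h2 : Real.sqrt ((t:ℝ) - 1) ^ 2 = (t:ℝ) - 1 := Real.sq_sqrt (by linarith)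
      have h1 : (t:ℝ) ≤ (Real.sqrt ((t:ℝ) - 1) + 1) ^ 2 := by
        nlinarith [Real.sqrt_nonneg ((t:ℝ) - 1)]
      calc Real.sqrt (t:ℝ) ≤ Real.sqrt ((Real.sqrt ((t:ℝ) - 1) + 1) ^ 2) :=
            Real.sqrt_le_sqrt h1
        _ = _ := Real.sqrt_sq (by positivity)
    have hu2max : Real.sqrt u ≤ 2 * max (Real.sqrt ((t:ℝ) - 1)) 1 := by
      have h1 := Real.sqrt_le_sqrt hut
      have h3 : Real.sqrt ((t:ℝ) - 1) ≤ max (Real.sqrt ((t:ℝ) - 1)) 1 := le_max_left _ _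
      linarith
    have part1 : Real.sqrt K / max (Real.sqrt ((t:ℝ) - 1)) 1 ≤
        2 * Real.sqrt K / Real.sqrt u := by
      rw [div_le_div_iff₀ hmax0 hsu]
      have hK0 : 0 ≤ Real.sqrt K := Real.sqrt_nonneg K
      nlinarith [mul_le_mul_of_nonneg_left hu2max hK0]
    -- part 2 : the exp sum
    have e1 : A₁ * Real.exp (-A₂ * ((T:ℝ) - (t:ℝ) + 1)) ≤ (2 * A₁ / (Real.exp 1 * A₂)) / u := by
      have hx : 0 < A₂ * ((T:ℝ) - (t:ℝ) + 1) := by nlinarith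
      have h1 := exp_neg_le_inv' hx
      rw [show -(A₂ * ((T:ℝ) - (t:ℝ) + 1)) = -A₂ * ((T:ℝ) - (t:ℝ) + 1) by ring] at h1
      calc A₁ * Real.exp (-A₂ * ((T:ℝ) - (t:ℝ) + 1))
          ≤ A₁ * (1 / (Real.exp 1 * (A₂ * ((T:ℝ) - (t:ℝ) + 1)))) :=
            mul_le_mul_of_nonneg_left h1 hA₁.le
        _ = A₁ / (Real.exp 1 * A₂ * ((T:ℝ) - (t:ℝ) + 1)) := by ring
        _ ≤ A₁ / (Real.exp 1 * A₂ * u) := by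
            gcongr
            all_goals first | positivity | linarith
        _ ≤ (2 * A₁ / (Real.exp 1 * A₂)) / u := by
            rw [div_div]
            gcongr
            all_goals first | positivity | linarith
    have e2 : B₁ * Real.exp (-B₂ * (t:ℝ)) ≤ (B₁ / (Real.exp 1 * B₂)) / u := by
      have hx : 0 < B₂ * (t:ℝ) := by nlinarith
      have h1 := exp_neg_le_inv' hx
      rw [show -(B₂ * (t:ℝ)) = -B₂ * (t:ℝ) by ring] at h1
      calc B₁ * Real.exp (-B₂ * (t:ℝ))
          ≤ B₁ * (1 / (Real.exp 1 * (B₂ * (t:ℝ)))) := mul_le_mul_of_nonneg_left h1 hB₁.le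
        _ = B₁ / (Real.exp 1 * B₂ * (t:ℝ)) := by ring
        _ ≤ B₁ / (Real.exp 1 * B₂ * u) := by
            gcongr
            all_goals first | positivity | linarith
        _ = (B₁ / (Real.exp 1 * B₂)) / u := by rw [div_div]
    have e3 : C₁ * Real.sqrt T * Real.exp (-C₂ * Real.sqrt T) ≤
        (27 * C₁ / (Real.exp 1 ^ 3 * C₂ ^ 3)) / u := by
      have hx : 0 < C₂ * Real.sqrt T := by positivity
      have h1 := exp_neg_le_cube' hx
      rw [show -(C₂ * Real.sqrt (T:ℝ)) = -C₂ * Real.sqrt (T:ℝ) by ring] at h1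
      have hsT2 : Real.sqrt (T:ℝ) * Real.sqrt (T:ℝ) = (T:ℝ) := Real.mul_self_sqrt hTpos.le
      have hTu : u ≤ (T:ℝ) := by linarith
      calc C₁ * Real.sqrt T * Real.exp (-C₂ * Real.sqrt T)
          ≤ C₁ * Real.sqrt T * (27 / (Real.exp 1 ^ 3 * (C₂ * Real.sqrt T) ^ 3)) := by
            apply mul_le_mul_of_nonneg_left h1 (by positivity)
        _ = 27 * C₁ / (Real.exp 1 ^ 3 * C₂ ^ 3 * (T:ℝ)) := by
            have hpow : Real.sqrt (T:ℝ) ^ 3 = (T:ℝ) * Real.sqrt (T:ℝ) := by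
              rw [pow_succ, Real.sq_sqrt hTpos.le]
            have hcube : (C₂ * Real.sqrt (T:ℝ)) ^ 3 = C₂ ^ 3 * ((T:ℝ) * Real.sqrt (T:ℝ)) := by
              rw [mul_pow, hpow]
            rw [hcube, ← mul_div_assoc, div_eq_div_iff (by positivity) (by positivity)]
            ring
        _ ≤ 27 * C₁ / (Real.exp 1 ^ 3 * C₂ ^ 3 * u) := by
            gcongr
            all_goals first | positivity | linarith
        _ = (27 * C₁ / (Real.exp 1 ^ 3 * C₂ ^ 3)) / u := by rw [div_div]
    have hsum : A₁ * Real.exp (-A₂ * ((T:ℝ) - (t:ℝ) + 1)) + B₁ * Real.exp (-B₂ * (t:ℝ)) +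
        C₁ * Real.sqrt T * Real.exp (-C₂ * Real.sqrt T) ≤ D / u := by
      have : (2 * A₁ / (Real.exp 1 * A₂)) / u + (B₁ / (Real.exp 1 * B₂)) / u +
          (27 * C₁ / (Real.exp 1 ^ 3 * C₂ ^ 3)) / u = D / u := by
        rw [← add_div, ← add_div, hDdef]
      linarith
    have part2 : Real.sqrt (A₁ * Real.exp (-A₂ * ((T:ℝ) - (t:ℝ) + 1)) +
        B₁ * Real.exp (-B₂ * (t:ℝ)) +
        C₁ * Real.sqrt T * Real.exp (-C₂ * Real.sqrt T)) ≤ Real.sqrt D / Real.sqrt u := by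
      calc Real.sqrt (A₁ * Real.exp (-A₂ * ((T:ℝ) - (t:ℝ) + 1)) +
            B₁ * Real.exp (-B₂ * (t:ℝ)) +
            C₁ * Real.sqrt T * Real.exp (-C₂ * Real.sqrt T))
          ≤ Real.sqrt (D / u) := Real.sqrt_le_sqrt hsum
        _ = Real.sqrt D / Real.sqrt u := Real.sqrt_div hD.le u
    have hfin : 2 * Real.sqrt K / Real.sqrt u + Real.sqrt D / Real.sqrt u =
        (M / 2) / Real.sqrt u := by
      rw [← add_div, hMdef]; ring_nf
    linarith
  -- nonnegativity of bracket
  have hBr0 : ∀ t : ℕ, 0 ≤ Real.sqrt K / max (Real.sqrt ((t : ℝ) - 1)) 1 +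
      Real.sqrt (A₁ * Real.exp (-A₂ * ((T : ℝ) - (t : ℝ) + 1)) +
        B₁ * Real.exp (-B₂ * (t : ℝ)) +
        C₁ * Real.sqrt T * Real.exp (-C₂ * Real.sqrt T)) := by
    intro t
    have h1 : (0:ℝ) < max (Real.sqrt ((t:ℝ) - 1)) 1 :=
      lt_of_lt_of_le one_pos (le_max_right _ _)
    positivity
  -- phase 1 strengthened invariant
  have hkey : ∀ t : ℕ, 1 ≤ t → 2 * t ≤ T + 2 → z t ≤ N * t / ((T:ℝ) - t + 1) ^ 2 := by
    intro t
    induction t with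
    | zero => omega
    | succ n ih =>
      intro _ h2
      rcases Nat.eq_zero_or_pos n with hn0 | hn1
      · subst hn0
        rw [hz1]
        push_cast
        positivity
      · have h2n : 2 * n ≤ T := by omega
        have hnT : n ≤ T - 1 := by omega
        have ihn := ih hn1 (by omega)
        have hnR : (1:ℝ) ≤ (n:ℝ) := by exact_mod_cast hn1
        have hnpos : (0:ℝ) < (n:ℝ) := by linarith
        have han : (n:ℝ) ≤ (T:ℝ) - (n:ℝ) := by
          have : (2*n : ℕ) ≤ (T:ℕ) := h2n
          have h := (Nat.cast_le (α := ℝ)).mpr this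
          push_cast at h
          linarith
        have hbrn := hbr n (n:ℝ) hn1 hnT hnR le_rfl han
        have hrecn := hrec n hn1 hnT
        set a : ℝ := (T:ℝ) - (n:ℝ) with hadef
        clear_value a
        have ha1 : 1 ≤ a := by linarith
        have ha0 : 0 < a := by linarith
        have hsn : Real.sqrt (n:ℝ) ≠ 0 := ne_of_gt (Real.sqrt_pos.mpr hnpos)
        have h1 : Real.sqrt (z n) ≤ Real.sqrt N * Real.sqrt (n:ℝ) / (a + 1) := by
          have h2' : z n ≤ (Real.sqrt N * Real.sqrt (n:ℝ) / (a + 1)) ^ 2 := by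
            have he : (Real.sqrt N * Real.sqrt (n:ℝ) / (a + 1)) ^ 2 = N * n / (a + 1) ^ 2 := by
              rw [div_pow, mul_pow, Real.sq_sqrt hN.le, Real.sq_sqrt hnpos.le]
            rw [he]; exact ihn
          calc Real.sqrt (z n) ≤ Real.sqrt ((Real.sqrt N * Real.sqrt (n:ℝ) / (a + 1)) ^ 2) :=
                Real.sqrt_le_sqrt h2'
            _ = _ := Real.sqrt_sq (by positivity)
        have hm1 : Real.sqrt (z n) * (Real.sqrt K / max (Real.sqrt ((n : ℝ) - 1)) 1 +
            Real.sqrt (A₁ * Real.exp (-A₂ * (a + 1)) +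
              B₁ * Real.exp (-B₂ * (n : ℝ)) +
              C₁ * Real.sqrt T * Real.exp (-C₂ * Real.sqrt T))) ≤
            (Real.sqrt N * Real.sqrt (n:ℝ) / (a + 1)) * ((M / 2) / Real.sqrt (n:ℝ)) :=
          mul_le_mul h1 hbrn (by rw [hadef]; exact hBr0 n) (by positivity)
        have hm2 : (Real.sqrt N * Real.sqrt (n:ℝ) / (a + 1)) * ((M / 2) / Real.sqrt (n:ℝ)) =
            Real.sqrt N * (M / 2) / (a + 1) := by
          field_simp
        have hm3 : 2 / a * Real.sqrt (z n) * (Real.sqrt K / max (Real.sqrt ((n : ℝ) - 1)) 1 +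
            Real.sqrt (A₁ * Real.exp (-A₂ * (a + 1)) +
              B₁ * Real.exp (-B₂ * (n : ℝ)) +
              C₁ * Real.sqrt T * Real.exp (-C₂ * Real.sqrt T))) ≤
            2 / a * (Real.sqrt N * (M / 2) / (a + 1)) := by
          rw [mul_assoc]
          exact mul_le_mul_of_nonneg_left (le_of_le_of_eq hm1 hm2) (by positivity)
        have hm4 : 2 / a * (Real.sqrt N * (M / 2) / (a + 1)) = Real.sqrt N * M / (a * (a + 1)) := by
          field_simp
        have p1 : N * (n:ℝ) / (a + 1) ^ 2 ≤ N * n / a ^ 2 := by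
          gcongr
          all_goals first | positivity | linarith
        have p2 : Real.sqrt N * M / (a * (a + 1)) ≤ N / 2 / a ^ 2 := by
          calc Real.sqrt N * M / (a * (a + 1)) ≤ Real.sqrt N * M / a ^ 2 := by
                gcongr
                all_goals first | positivity | linarith
            _ ≤ N / 2 / a ^ 2 := by gcongr
        have p3 : (16:ℝ) / a ^ 2 ≤ N / 64 / a ^ 2 := by
          gcongr
          all_goals first | positivity | linarith
        have p4 : N * (n:ℝ) / a ^ 2 + N / 2 / a ^ 2 + N / 64 / a ^ 2 ≤
            N * ((n:ℝ) + 1) / a ^ 2 := by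
          rw [← add_div, ← add_div]
          gcongr
          all_goals first | positivity | linarith
        have htarg : ((T:ℝ) - ((n:ℕ) + 1 : ℕ) + 1) = a := by
          push_cast
          rw [hadef]; ring
        rw [htarg]
        have hfin : z (n + 1) ≤ N * (n:ℝ) / (a + 1) ^ 2 + Real.sqrt N * M / (a * (a + 1)) +
            16 / a ^ 2 := by
          calc z (n + 1) ≤ _ := hrecn
            _ ≤ _ := by
              have := le_of_le_of_eq hm3 hm4
              linarith [ihn]
        push_cast
        linarith
  -- phase 2
  have hph2 : ∀ t : ℕ, T < 2 * t → t ≤ T - 1 → z t ≤ N / ((T:ℝ) - (t:ℝ)) := by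
    intro t
    induction t with
    | zero => omega
    | succ n ih =>
      intro hTn hnT1
      have hn1 : 1 ≤ n := by omega
      have hnT : n ≤ T - 1 := by omega
      have haR : (n:ℝ) + 2 ≤ (T:ℝ) := by
        have : n + 2 ≤ T := by omega
        exact_mod_cast this
      by_cases hc : T < 2 * n
      · -- inductive phase-2 step
        have ihn := ih hc hnT
        have hnR : (1:ℝ) ≤ (n:ℝ) := by exact_mod_cast hn1
        have han : (T:ℝ) - (n:ℝ) ≤ (n:ℝ) := by
          have : T + 1 ≤ 2 * n := by omega
          have h := (Nat.cast_le (α := ℝ)).mpr this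
          push_cast at h
          linarith
        have hrecn := hrec n hn1 hnT
        have hbrn := hbr n ((T:ℝ) - (n:ℝ)) hn1 hnT (by linarith) han le_rfl
        set a : ℝ := (T:ℝ) - (n:ℝ) with hadef
        clear_value a
        have ha2 : 2 ≤ a := by linarith
        have ha0 : 0 < a := by linarith
        have hsa : Real.sqrt a * Real.sqrt a = a := Real.mul_self_sqrt ha0.le
        have hsa0 : 0 < Real.sqrt a := Real.sqrt_pos.mpr ha0
        have h1 : Real.sqrt (z n) ≤ Real.sqrt N / Real.sqrt a := by
          have h2' : z n ≤ (Real.sqrt N / Real.sqrt a) ^ 2 := by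
            have he : (Real.sqrt N / Real.sqrt a) ^ 2 = N / a := by
              rw [div_pow, Real.sq_sqrt hN.le, Real.sq_sqrt ha0.le]
            rw [he]; exact ihn
          calc Real.sqrt (z n) ≤ Real.sqrt ((Real.sqrt N / Real.sqrt a) ^ 2) :=
                Real.sqrt_le_sqrt h2'
            _ = _ := Real.sqrt_sq (by positivity)
        have hm1 : Real.sqrt (z n) * (Real.sqrt K / max (Real.sqrt ((n : ℝ) - 1)) 1 +
            Real.sqrt (A₁ * Real.exp (-A₂ * (a + 1)) +
              B₁ * Real.exp (-B₂ * (n : ℝ)) +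
              C₁ * Real.sqrt T * Real.exp (-C₂ * Real.sqrt T))) ≤
            (Real.sqrt N / Real.sqrt a) * ((M / 2) / Real.sqrt a) :=
          mul_le_mul h1 hbrn (by rw [hadef]; exact hBr0 n) (by positivity)
        have hm2 : (Real.sqrt N / Real.sqrt a) * ((M / 2) / Real.sqrt a) =
            Real.sqrt N * (M / 2) / a := by
          rw [div_mul_div_comm, hsa]
        have hm3 : 2 / a * Real.sqrt (z n) * (Real.sqrt K / max (Real.sqrt ((n : ℝ) - 1)) 1 +
            Real.sqrt (A₁ * Real.exp (-A₂ * (a + 1)) +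
              B₁ * Real.exp (-B₂ * (n : ℝ)) +
              C₁ * Real.sqrt T * Real.exp (-C₂ * Real.sqrt T))) ≤
            2 / a * (Real.sqrt N * (M / 2) / a) := by
          rw [mul_assoc]
          exact mul_le_mul_of_nonneg_left (le_of_le_of_eq hm1 hm2) (by positivity)
        have hm4 : 2 / a * (Real.sqrt N * (M / 2) / a) = Real.sqrt N * M / a ^ 2 := by
          field_simp
        have p2 : Real.sqrt N * M / a ^ 2 ≤ N / 2 / a ^ 2 := by gcongr
        have p3 : (16:ℝ) / a ^ 2 ≤ N / 64 / a ^ 2 := by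
          gcongr
          all_goals first | positivity | linarith
        have q1 : N / a ^ 2 ≤ N / (a - 1) - N / a := by
          have he : N / (a - 1) - N / a = N / ((a - 1) * a) := by
            rw [div_sub_div _ _ (by linarith : a - 1 ≠ 0) (by linarith : a ≠ 0),
              show N * a - (a - 1) * N = N by ring]
          rw [he]
          gcongr
          all_goals first | positivity | exact mul_pos (by linarith) ha0 | linarith
        have q2 : N / 2 / a ^ 2 + N / 64 / a ^ 2 ≤ N / a ^ 2 := by
          rw [← add_div]
          gcongr
          all_goals first | positivity | linarith
        have htarg : (T:ℝ) - ((n:ℕ) + 1 : ℕ) = a - 1 := by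
          push_cast
          rw [hadef]; ring
        rw [htarg]
        have := le_of_le_of_eq hm3 hm4
        calc z (n + 1) ≤ _ := hrecn
          _ ≤ N / (a - 1) := by linarith
      · -- base case: coming out of phase 1
        have h2 : 2 * (n + 1) ≤ T + 2 := by omega
        have hk := hkey (n + 1) (by omega) h2
        have han : (n:ℝ) ≤ (T:ℝ) - (n:ℝ) := by
          have : (2*n : ℕ) ≤ (T:ℕ) := by omega
          have h := (Nat.cast_le (α := ℝ)).mpr this
          push_cast at h
          linarith
        set a : ℝ := (T:ℝ) - (n:ℝ) with hadef
        clear_value a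
        have ha2 : 2 ≤ a := by linarith
        have hcast : ((T:ℝ) - ((n:ℕ) + 1 : ℕ) + 1) = a := by
          push_cast
          rw [hadef]; ring
        rw [hcast] at hk
        have htarg : (T:ℝ) - ((n:ℕ) + 1 : ℕ) = a - 1 := by
          push_cast
          rw [hadef]; ring
        rw [htarg]
        have hineq : N * ((n:ℕ) + 1 : ℕ) / a ^ 2 ≤ N / (a - 1) := by
          push_cast
          rw [div_le_div_iff₀ (by positivity) (by linarith)]
          nlinarith [mul_nonneg (mul_nonneg hN.le (by linarith : (0:ℝ) ≤ a - (n:ℝ)))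
            (by linarith : (0:ℝ) ≤ a - 1)]
        linarith
  constructor
  · intro t ht1 h2t
    have hk := hkey t ht1 (by omega)
    have htTR : (t:ℝ) + 1 ≤ (T:ℝ) := by
      have : t + 1 ≤ T := by omega
      exact_mod_cast this
    have h0 : (0:ℝ) < (T:ℝ) - (t:ℝ) := by linarith
    calc z t ≤ N * t / ((T:ℝ) - t + 1) ^ 2 := hk
      _ ≤ N * t / ((T:ℝ) - t) ^ 2 := by
          gcongr
          all_goals first | positivity | linarith
  · exact hph2
end

section
/- The optimal value of the DLP equals the optimal value of its reduced dual: OPT_D = min{ b^⊤λ + Σ_{j=1}^n p_j·(μ_j − c_j^⊤λ)_+ : λ ∈ ℝ^m, λ ≥ 0 }, and the minimum on the right-hand side is attained. -/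
open MeasureTheory (Measure IsProbabilityMeasure)
open ProbabilityTheory (iIndepFun IndepFun)
open scoped BigOperators

namespace FairOnline

/-- Problem data for the online resource allocation problem:
`m` resources, `n` order types, probabilities `p`, rewards `μ`,
consumption vectors `c`, average resource vector `b`. -/
structure ProblemData (m n : ℕ) where
  p : Fin n → ℝ
  μ : Fin n → ℝ
  c : Fin n → Fin m → ℝ
  b : Fin m → ℝ
  hm : 0 < m
  hn : 0 < n
  hp_pos : ∀ j, 0 < p j
  hp_sum : ∑ j, p j = 1
  hμ : ∀ j, 0 ≤ μ j ∧ μ j ≤ 1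
  hc : ∀ j i, 0 ≤ c j i ∧ c j i ≤ 1
  hb_pos : ∀ i, 0 < b i

variable {m n : ℕ}

/-- Feasibility for the LP with (possibly perturbed) data `(p', b')`:
`y ∈ [0,1]^n` and `∑_j p'_j y_j c_j ≤ b'` componentwise. -/
def Feasible (pd : ProblemData m n) (p' : Fin n → ℝ) (b' : Fin m → ℝ)
    (y : Fin n → ℝ) : Prop :=
  (∀ j, 0 ≤ y j ∧ y j ≤ 1) ∧ ∀ i, ∑ j, p' j * y j * pd.c j i ≤ b' i

/-- Objective of the LP with data `p'`. -/
def objective (pd : ProblemData m n) (p' : Fin n → ℝ) (y : Fin n → ℝ) : ℝ :=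
  ∑ j, p' j * pd.μ j * y j

/-- `y` is an optimal solution of the LP with data `(p', b')`. -/
def IsOptimal (pd : ProblemData m n) (p' : Fin n → ℝ) (b' : Fin m → ℝ)
    (y : Fin n → ℝ) : Prop :=
  Feasible pd p' b' y ∧
    ∀ y', Feasible pd p' b' y' → objective pd p' y' ≤ objective pd p' y

/-- Optimal value `OPT_D` of the deterministic LP (DLP). -/
noncomputable def OPT (pd : ProblemData m n) : ℝ :=
  sSup (objective pd pd.p '' {y | Feasible pd pd.p pd.b y})

/-- The slack variables of the LP with data `(p', b')` at the point `y`. -/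
def slack (pd : ProblemData m n) (p' : Fin n → ℝ) (b' : Fin m → ℝ)
    (y : Fin n → ℝ) : (Fin m ⊕ Fin n ⊕ Fin n) → ℝ
  | Sum.inl i => b' i - ∑ j, p' j * y j * pd.c j i
  | Sum.inr (Sum.inl j) => y j
  | Sum.inr (Sum.inr j) => 1 - y j

open Classical in
/-- Sum of logarithms of those slack variables that are not identically zero
on the optimal set. -/
noncomputable def acScore (pd : ProblemData m n) (p' : Fin n → ℝ) (b' : Fin m → ℝ)
    (y : Fin n → ℝ) : ℝ :=
  ∑ k : Fin m ⊕ Fin n ⊕ Fin n,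
    if ∃ y', IsOptimal pd p' b' y' ∧ slack pd p' b' y' k ≠ 0
    then Real.log (slack pd p' b' y k) else 0

/-- `y` is the analytic center of the optimal set of the LP with data `(p',b')`:
it is optimal and maximizes the sum of logarithms of those slack variables
not identically zero on the optimal set. -/
def IsAnalyticCenter (pd : ProblemData m n) (p' : Fin n → ℝ) (b' : Fin m → ℝ)
    (y : Fin n → ℝ) : Prop :=
  IsOptimal pd p' b' y ∧
    ∀ y', IsOptimal pd p' b' y' → acScore pd p' b' y' ≤ acScore pd p' b' y

/-- Objective of the reduced dual with data `(p', b')`: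
`b'^⊤λ + ∑_j p'_j (μ_j − c_j^⊤λ)_+`. -/
noncomputable def dualObj (pd : ProblemData m n) (p' : Fin n → ℝ) (b' : Fin m → ℝ)
    (lam : Fin m → ℝ) : ℝ :=
  ∑ i, b' i * lam i + ∑ j, p' j * max (pd.μ j - ∑ i, pd.c j i * lam i) 0

/-- `lam` is an optimal solution of the reduced dual with data `(p', b')`. -/
def IsDualOptimal (pd : ProblemData m n) (p' : Fin n → ℝ) (b' : Fin m → ℝ)
    (lam : Fin m → ℝ) : Prop :=
  (∀ i, 0 ≤ lam i) ∧
    ∀ lam', (∀ i, 0 ≤ lam' i) → dualObj pd p' b' lam ≤ dualObj pd p' b' lam'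

/-- `D*`: the optimal solution set of the reduced dual of the DLP. -/
def Dstar (pd : ProblemData m n) : Set (Fin m → ℝ) :=
  {lam | IsDualOptimal pd pd.p pd.b lam}

/-- The binding set of a solution `y` for data `(p', b')`:
resources whose constraint holds with equality. -/
def bindingSetOf (pd : ProblemData m n) (p' : Fin n → ℝ) (b' : Fin m → ℝ)
    (y : Fin n → ℝ) : Set (Fin m) :=
  {i | ∑ j, p' j * y j * pd.c j i = b' i}

/-- Dual nondegeneracy with respect to a binding set `Bset`: every dual
optimal solution is strictly positive on all binding coordinates. -/
def DualNondegenerate (pd : ProblemData m n) (Bset : Set (Fin m)) : Prop :=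
  ∀ lam ∈ Dstar pd, ∀ i ∈ Bset, 0 < lam i

/-- `max_{j∈[n], λ∈D*} |μ_j − c_j^⊤λ|`. -/
noncomputable def maxGap (pd : ProblemData m n) : ℝ :=
  sSup {x : ℝ | ∃ j : Fin n, ∃ lam ∈ Dstar pd,
    x = |pd.μ j - ∑ i, pd.c j i * lam i|}

open Classical in
/-- The vector `λ_max`. -/
noncomputable def lamMax (pd : ProblemData m n) : Fin m → ℝ := fun i =>
  if ∃ lam ∈ Dstar pd, 0 < lam i
  then sSup {x : ℝ | ∃ lam ∈ Dstar pd, x = ‖lam‖}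
  else 0

/-- The stable-region property of a constant `L` (relative to binding set `Bset`):
for every perturbed data `(b̂, p̂)` in the region, every dual optimal solution of
the perturbed problem lies in `D*`. -/
def StableRegionConst (pd : ProblemData m n) (Bset : Set (Fin m)) (L : ℝ) : Prop :=
  ∀ (bhat : Fin m → ℝ) (phat : Fin n → ℝ),
    (∀ i ∈ Bset, |bhat i - pd.b i| ≤ L) →
    (∀ i ∉ Bset, pd.b i - L ≤ bhat i) →
    (∀ j, |phat j - pd.p j| ≤ L) →
    ∀ lam, IsDualOptimal pd phat bhat lam → lam ∈ Dstar pd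

/-- The region `Ω = ∏_{i∈B}[b_i−L, b_i+L] × ∏_{i∈N}[b_i−L, ∞)`. -/
def stableSet (pd : ProblemData m n) (Bset : Set (Fin m)) (L : ℝ) :
    Set (Fin m → ℝ) :=
  {v | ∀ i, (i ∈ Bset → |v i - pd.b i| ≤ L) ∧ (i ∉ Bset → pd.b i - L ≤ v i)}

section Online

variable {Ω : Type}

/-- The empirical frequency `p̂_{j,t}` of type `j` among the first `t−1` orders. -/
noncomputable def pHat (ξ : ℕ → Ω → Fin n) (t : ℕ) (ω : Ω) (j : Fin n) : ℝ :=
  (∑ s ∈ Finset.Icc 1 (t - 1), if ξ s ω = j then (1 : ℝ) else 0) / ((t : ℝ) - 1)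

/-- Remaining resource `B_t` at the beginning of time `t`:
`B_1 = T·b`, `B_{t+1} = B_t − a_t x_t`. -/
noncomputable def Brem (pd : ProblemData m n) (T : ℕ) (ξ : ℕ → Ω → Fin n)
    (x : ℕ → Ω → ℝ) (t : ℕ) (ω : Ω) (i : Fin m) : ℝ :=
  (T : ℝ) * pd.b i - ∑ s ∈ Finset.Icc 1 (t - 1), pd.c (ξ s ω) i * x s ω

/-- Average remaining resource `b_t = B_t/(T−t+1)`. -/
noncomputable def bavg (pd : ProblemData m n) (T : ℕ) (ξ : ℕ → Ω → Fin n)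
    (x : ℕ → Ω → ℝ) (t : ℕ) (ω : Ω) (i : Fin m) : ℝ :=
  Brem pd T ξ x t ω i / ((T : ℝ) - t + 1)

/-- The first time `t ∈ [2, T]` at which some resource is depleted
(`T+1` if none is). -/
noncomputable def depleteTime (pd : ProblemData m n) (T : ℕ) (ξ : ℕ → Ω → Fin n)
    (x : ℕ → Ω → ℝ) (ω : Ω) : ℕ :=
  sInf ({t | (2 ≤ t ∧ t ≤ T) ∧ ∃ i, Brem pd T ξ x t ω i ≤ 0} ∪ {T + 1})

/-- The exit time `τ_S` of the average-resource process `b_t` out of the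
stable region. -/
noncomputable def exitTime (pd : ProblemData m n) (T : ℕ) (ξ : ℕ → Ω → Fin n)
    (x : ℕ → Ω → ℝ) (Bset : Set (Fin m)) (L : ℝ) (ω : Ω) : ℕ :=
  sInf ({t | (1 ≤ t ∧ t ≤ T) ∧ bavg pd T ξ x t ω ∉ stableSet pd Bset L} ∪ {T + 1})

/-- Number (counted with the `{0,1}`-valued decisions) of accepted orders of
type `j` during the horizon. -/
noncomputable def Naccept (pd : ProblemData m n) (T : ℕ) (ξ : ℕ → Ω → Fin n)
    (x : ℕ → Ω → ℝ) (j : Fin n) (ω : Ω) : ℝ :=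
  ∑ t ∈ Finset.Icc 1 T, if ξ t ω = j then x t ω else 0

/-- Regret: `E[T·OPT_D − ∑_t r_t x_t]`. -/
noncomputable def regretOf (pd : ProblemData m n) (T : ℕ) {mΩ : MeasurableSpace Ω}
    (P : Measure Ω) (ξ : ℕ → Ω → Fin n) (x : ℕ → Ω → ℝ) : ℝ :=
  (T : ℝ) * OPT pd - ∫ ω, (∑ t ∈ Finset.Icc 1 T, pd.μ (ξ t ω) * x t ω) ∂P

/-- History σ-algebra `H_t` generated by the orders and the policy's
randomization up to time `t`. -/
def hist [MeasurableSpace Ω] (ξ : ℕ → Ω → Fin n) (U : ℕ → Ω → ℝ) (t : ℕ) :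
    MeasurableSpace Ω :=
  ⨆ s ∈ Finset.Icc 1 t,
    MeasurableSpace.comap (fun ω => (ξ s ω, U s ω)) inferInstance

end Online

/-- A run of an arbitrary nonanticipating online policy over horizon `T`:
i.i.d. orders with law `p`, decisions `x_t ∈ {0,1}` adapted to the history
(which includes an independent uniform randomization `U`), respecting the
resource constraints. -/
structure PolicyRun (pd : ProblemData m n) (T : ℕ) where
  Ω : Type
  [mΩ : MeasurableSpace Ω]
  P : Measure Ω
  hP : IsProbabilityMeasure P
  ξ : ℕ → Ω → Fin n
  U : ℕ → Ω → ℝ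
  x : ℕ → Ω → ℝ
  hξ_meas : ∀ t, Measurable (ξ t)
  hU_meas : ∀ t, Measurable (U t)
  hiid : iIndepFun (fun t ω => (ξ t ω, U t ω)) P
  hξU_indep : ∀ t, IndepFun (ξ t) (U t) P
  hξ_law : ∀ t j, P {ω | ξ t ω = j} = ENNReal.ofReal (pd.p j)
  hU_law : ∀ t s, 0 ≤ s → s ≤ 1 → P {ω | U t ω ≤ s} = ENNReal.ofReal s
  hx01 : ∀ t ω, x t ω = 0 ∨ x t ω = 1
  hx_adapted : ∀ t, @Measurable Ω ℝ (hist ξ U t) _ (x t)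
  hconstraint : ∀ t, t ≤ T → ∀ ω i,
    ∑ s ∈ Finset.Icc 1 t, pd.c (ξ s ω) i * x s ω ≤ (T : ℝ) * pd.b i

/-- A run of the Fair Adaptive Allocation algorithm (Algorithm 2) over
horizon `T`: at each time `t ≥ 2` the algorithm solves the sampled LP with
data `(p̂_t, b_t)`, takes the analytic center `yP_t`, detects the binding set,
forms the modified right-hand side `bP_t`, re-solves to get the analytic
center `yS_t`, and accepts the arriving order of type `j` with probability
`yS_{j,t}` (via the uniform randomization `U_t`) when the resources permit. -/
structure FairRun (pd : ProblemData m n) (T : ℕ) where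
  Ω : Type
  [mΩ : MeasurableSpace Ω]
  P : Measure Ω
  hP : IsProbabilityMeasure P
  ξ : ℕ → Ω → Fin n
  U : ℕ → Ω → ℝ
  x : ℕ → Ω → ℝ
  yP : ℕ → Ω → Fin n → ℝ
  bP : ℕ → Ω → Fin m → ℝ
  yS : ℕ → Ω → Fin n → ℝ
  hξ_meas : ∀ t, Measurable (ξ t)
  hU_meas : ∀ t, Measurable (U t)
  hx_meas : ∀ t, Measurable (x t)
  hyS_meas : ∀ t, Measurable (yS t)
  hiid : iIndepFun (fun t ω => (ξ t ω, U t ω)) P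
  hξU_indep : ∀ t, IndepFun (ξ t) (U t) P
  hξ_law : ∀ t j, P {ω | ξ t ω = j} = ENNReal.ofReal (pd.p j)
  hU_law : ∀ t s, 0 ≤ s → s ≤ 1 → P {ω | U t ω ≤ s} = ENNReal.ofReal s
  hx1 : ∀ ω, x 1 ω = 1
  hyP_ac : ∀ t, 2 ≤ t → t ≤ T → ∀ ω,
    IsAnalyticCenter pd (pHat ξ t ω) (bavg pd T ξ x t ω) (yP t ω)
  hbP : ∀ t, 2 ≤ t → t ≤ T → ∀ ω i,
    bP t ω i =
      if ∑ j, pHat ξ t ω j * pd.c j i * yP t ω j = bavg pd T ξ x t ω i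
      then bavg pd T ξ x t ω i else pd.b i
  hbP1 : ∀ ω i, bP 1 ω i = pd.b i
  hyS_ac : ∀ t, 2 ≤ t → t ≤ T → ∀ ω,
    IsAnalyticCenter pd (pHat ξ t ω) (bP t ω) (yS t ω)
  hyS_range : ∀ t ω j, 0 ≤ yS t ω j ∧ yS t ω j ≤ 1
  hx_rule : ∀ t, 2 ≤ t → t ≤ T → ∀ ω,
    x t ω =
      if (∀ i, pd.c (ξ t ω) i ≤ Brem pd T ξ x t ω i) ∧ U t ω ≤ yS t ω (ξ t ω)
      then 1 else 0

/-- The regret of a run (of the fair algorithm). -/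
noncomputable def FairRun.regret {pd : ProblemData m n} {T : ℕ}
    (R : FairRun pd T) : ℝ :=
  regretOf pd T R.P R.ξ R.x

/-- The regret of a run (of a general policy). -/
noncomputable def PolicyRun.regret {pd : ProblemData m n} {T : ℕ}
    (R : PolicyRun pd T) : ℝ :=
  regretOf pd T R.P R.ξ R.x


-- sum swap identity
private lemma sum_swap_id (pd : ProblemData m n) (y : Fin n → ℝ) (lam : Fin m → ℝ) :
    ∑ i, (∑ j, pd.p j * y j * pd.c j i) * lam i
      = ∑ j, pd.p j * (y j * ∑ i, pd.c j i * lam i) := by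
  simp_rw [Finset.sum_mul, Finset.mul_sum]
  rw [Finset.sum_comm]
  exact Finset.sum_congr rfl fun j _ => Finset.sum_congr rfl fun i _ => by ring

private lemma weak_duality (pd : ProblemData m n) (lam : Fin m → ℝ)
    (hlam : ∀ i, 0 ≤ lam i) (y : Fin n → ℝ) (hy : Feasible pd pd.p pd.b y) :
    objective pd pd.p y ≤ dualObj pd pd.p pd.b lam := by
  obtain ⟨hy01, hycon⟩ := hy
  have h1 : objective pd pd.p y
      = ∑ j, pd.p j * (y j * (pd.μ j - ∑ i, pd.c j i * lam i))
        + ∑ j, pd.p j * (y j * ∑ i, pd.c j i * lam i) := by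
    unfold objective
    rw [← Finset.sum_add_distrib]
    exact Finset.sum_congr rfl fun j _ => by ring
  rw [h1, dualObj, add_comm]
  refine add_le_add ?_ ?_
  · rw [← sum_swap_id]
    refine Finset.sum_le_sum fun i _ => ?_
    exact mul_le_mul_of_nonneg_right (hycon i) (hlam i)
  · refine Finset.sum_le_sum fun j _ => ?_
    have hp := (pd.hp_pos j).le
    have hy0 := (hy01 j).1
    have hy1 := (hy01 j).2
    refine mul_le_mul_of_nonneg_left ?_ hp
    rcases le_or_gt (pd.μ j - ∑ i, pd.c j i * lam i) 0 with hd | hd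
    · exact (mul_nonpos_of_nonneg_of_nonpos hy0 hd).trans (le_max_right _ 0)
    · have : y j * (pd.μ j - ∑ i, pd.c j i * lam i) ≤ pd.μ j - ∑ i, pd.c j i * lam i := by
        nlinarith
      exact this.trans (le_max_left _ 0)



/-- Strong duality for the DLP: `OPT_D` equals the minimum
of the reduced dual objective over `λ ≥ 0`, and the minimum is attained. -/
theorem dlp_strong_duality {m n : ℕ} (pd : ProblemData m n) :
    IsLeast {v : ℝ | ∃ lam : Fin m → ℝ, (∀ i, 0 ≤ lam i) ∧
      v = dualObj pd pd.p pd.b lam} (OPT pd) := by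
  classical
  have hzero : Feasible pd pd.p pd.b (fun _ => 0) := by
    refine ⟨fun j => ⟨le_refl 0, zero_le_one⟩, fun i => ?_⟩
    simp [(pd.hb_pos i).le]
  have hne : (objective pd pd.p '' {y | Feasible pd pd.p pd.b y}).Nonempty :=
    ⟨_, ⟨fun _ => 0, hzero, rfl⟩⟩
  have hbdd : BddAbove (objective pd pd.p '' {y | Feasible pd pd.p pd.b y}) := by
    refine ⟨dualObj pd pd.p pd.b 0, ?_⟩
    rintro v ⟨y, hy, rfl⟩
    exact weak_duality pd 0 (fun i => le_refl 0) y hy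
  have hOPT_ub : ∀ y, Feasible pd pd.p pd.b y → objective pd pd.p y ≤ OPT pd :=
    fun y hy => le_csSup hbdd ⟨y, hy, rfl⟩
  have hle_dual : ∀ lam : Fin m → ℝ, (∀ i, 0 ≤ lam i) →
      OPT pd ≤ dualObj pd pd.p pd.b lam := by
    intro lam hlam
    refine csSup_le hne ?_
    rintro v ⟨y, hy, rfl⟩
    exact weak_duality pd lam hlam y hy
  -- The convex perturbation set A
  set A : Set ((Fin m → ℝ) × ℝ) := {a | ∃ y : Fin n → ℝ,
    (∀ j, 0 ≤ y j ∧ y j ≤ 1) ∧ (∀ i, ∑ j, pd.p j * y j * pd.c j i ≤ pd.b i + a.1 i) ∧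
    a.2 ≤ objective pd pd.p y} with hA_def
  have hA_conv : Convex ℝ A := by
    rintro ⟨u1, r1⟩ ⟨y1, hy1, hc1, hr1⟩ ⟨u2, r2⟩ ⟨y2, hy2, hc2, hr2⟩ s t hs ht hst
    refine ⟨fun j => s * y1 j + t * y2 j, fun j => ⟨?_, ?_⟩, fun i => ?_, ?_⟩
    · show (0:ℝ) ≤ s * y1 j + t * y2 j
      exact add_nonneg (mul_nonneg hs (hy1 j).1) (mul_nonneg ht (hy2 j).1)
    · show s * y1 j + t * y2 j ≤ 1
      nlinarith [mul_le_mul_of_nonneg_left (hy1 j).2 hs, mul_le_mul_of_nonneg_left (hy2 j).2 ht]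
    · have hsum : ∑ j, pd.p j * (s * y1 j + t * y2 j) * pd.c j i
          = s * ∑ j, pd.p j * y1 j * pd.c j i + t * ∑ j, pd.p j * y2 j * pd.c j i := by
        rw [Finset.mul_sum, Finset.mul_sum, ← Finset.sum_add_distrib]
        exact Finset.sum_congr rfl fun j _ => by ring
      rw [hsum]
      have h1 := mul_le_mul_of_nonneg_left (hc1 i) hs
      have h2 := mul_le_mul_of_nonneg_left (hc2 i) ht
      have : (s • ((u1, r1) : (Fin m → ℝ) × ℝ) + t • (u2, r2)).1 i
          = s * u1 i + t * u2 i := by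
        simp
      rw [this]
      nlinarith [pd.hb_pos i]
    · have : (s • ((u1, r1) : (Fin m → ℝ) × ℝ) + t • (u2, r2)).2 = s * r1 + t * r2 := by
        simp
      rw [this]
      have hobj : objective pd pd.p (fun j => s * y1 j + t * y2 j)
          = s * objective pd pd.p y1 + t * objective pd pd.p y2 := by
        unfold objective
        rw [Finset.mul_sum, Finset.mul_sum, ← Finset.sum_add_distrib]
        exact Finset.sum_congr rfl fun j _ => by ring
      rw [hobj]
      exact add_le_add (mul_le_mul_of_nonneg_left hr1 hs) (mul_le_mul_of_nonneg_left hr2 ht)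
  -- interior point
  have hBsub : {a : (Fin m → ℝ) × ℝ | (∀ i, -pd.b i < a.1 i) ∧ a.2 < 0} ⊆ A := by
    rintro ⟨u, r⟩ ⟨hu, hr⟩
    refine ⟨fun _ => 0, fun j => ⟨le_refl 0, zero_le_one⟩, fun i => ?_, ?_⟩
    · have := (hu i).le
      simp only []
      have hz : ∑ j, pd.p j * (fun _ => (0:ℝ)) j * pd.c j i = 0 := by simp
      rw [hz]
      linarith
    · have hz : objective pd pd.p (fun _ => 0) = 0 := by simp [objective]
      rw [hz]
      exact hr.le
  have hBopen : IsOpen {a : (Fin m → ℝ) × ℝ | (∀ i, -pd.b i < a.1 i) ∧ a.2 < 0} := by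
    have h1 : IsOpen {a : (Fin m → ℝ) × ℝ | ∀ i, -pd.b i < a.1 i} := by
      rw [Set.setOf_forall]
      exact isOpen_iInter_of_finite fun i =>
        isOpen_lt continuous_const ((continuous_apply i).comp continuous_fst)
    exact h1.inter (isOpen_lt continuous_snd continuous_const)
  have hz0 : (((fun _ => 0) : Fin m → ℝ), (-1 : ℝ)) ∈ interior A :=
    interior_maximal hBsub hBopen
      ⟨fun i => by simpa using pd.hb_pos i, by norm_num⟩
  -- (0, OPT) is not interior
  have hx_notin : ((((fun _ => 0) : Fin m → ℝ), OPT pd)) ∉ interior A := by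
    intro hx
    have hmem : A ∈ nhds ((((fun _ => 0) : Fin m → ℝ), OPT pd)) :=
      mem_interior_iff_mem_nhds.mp hx
    have hcont : Filter.Tendsto (fun ε : ℝ => ((((fun _ => 0) : Fin m → ℝ), OPT pd + ε)))
        (nhds 0) (nhds ((((fun _ => 0) : Fin m → ℝ), OPT pd))) := by
      have hc : Continuous fun ε : ℝ => ((((fun _ => 0) : Fin m → ℝ), OPT pd + ε)) := by
        continuity
      have := hc.tendsto 0
      simpa using this
    have hev : ∀ᶠ ε : ℝ in nhdsWithin 0 (Set.Ioi 0),
        ((((fun _ => 0) : Fin m → ℝ), OPT pd + ε)) ∈ A :=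
      (hcont.eventually_mem hmem).filter_mono nhdsWithin_le_nhds
    obtain ⟨ε, hεA, hεpos⟩ := (hev.and self_mem_nhdsWithin).exists
    obtain ⟨y, hy01, hycon, hr⟩ := hεA
    have hfeas : Feasible pd pd.p pd.b y := ⟨hy01, fun i => by simpa using hycon i⟩
    have h1 := hOPT_ub y hfeas
    have h2 : (0:ℝ) < ε := hεpos
    simp only [] at hr
    linarith
  -- separation
  obtain ⟨f, hf⟩ := geometric_hahn_banach_open_point (hA_conv.interior) isOpen_interior hx_notin
  have hfa_le : ∀ a ∈ A, f a ≤ f (((fun _ => 0) : Fin m → ℝ), OPT pd) := by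
    intro a ha
    by_contra hgt
    push_neg at hgt
    set z0 : (Fin m → ℝ) × ℝ := (((fun _ => 0) : Fin m → ℝ), (-1 : ℝ)) with hz0_def
    have hz0lt : f z0 < f (((fun _ => 0) : Fin m → ℝ), OPT pd) := hf z0 hz0
    set X : ℝ := f (((fun _ => 0) : Fin m → ℝ), OPT pd) with hX_def
    have hden : 0 < f a - f z0 := by linarith
    set q : ℝ := (X - f z0) / (f a - f z0) with hq_def
    have hq1 : q < 1 := (div_lt_one hden).mpr (by linarith)
    have hq0 : 0 < q := div_pos (by linarith) hden
    set t : ℝ := (q + 1) / 2 with ht_def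
    have ht1 : t < 1 := by rw [ht_def]; linarith
    have ht2 : 0 < t := by rw [ht_def]; linarith
    have hmem : (1 - t) • z0 + t • a ∈ interior A :=
      hA_conv.combo_interior_closure_mem_interior hz0 (subset_closure ha)
        (by linarith) ht2.le (by ring)
    have hlt := hf _ hmem
    rw [map_add, map_smul, map_smul, smul_eq_mul, smul_eq_mul] at hlt
    have hqmul : q * (f a - f z0) = X - f z0 := div_mul_cancel₀ _ hden.ne'
    have hqt : q < t := by rw [ht_def]; linarith
    nlinarith
  -- coordinates of f
  set g : Fin m → ℝ := fun i => f ((Pi.single i 1 : Fin m → ℝ), 0) with hg_def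
  set κ : ℝ := f (((fun _ => 0) : Fin m → ℝ), 1) with hκ_def
  have hf_eq : ∀ (u : Fin m → ℝ) (r : ℝ), f (u, r) = (∑ i, u i * g i) + r * κ := by
    intro u r
    have hsingle : ∀ i : Fin m, (u i • (((Pi.single i 1 : Fin m → ℝ), (0:ℝ)) : (Fin m → ℝ) × ℝ))
        = (((Pi.single i (u i) : Fin m → ℝ), (0:ℝ)) : (Fin m → ℝ) × ℝ) := by
      intro i
      refine Prod.ext ?_ ?_
      · funext jj
        simp [Pi.single_apply, mul_ite]
      · simp
    have hdecomp : ((u, r) : (Fin m → ℝ) × ℝ)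
        = (∑ i, u i • (((Pi.single i 1 : Fin m → ℝ), (0:ℝ)) : (Fin m → ℝ) × ℝ))
          + r • ((((fun _ => 0) : Fin m → ℝ), (1:ℝ)) : (Fin m → ℝ) × ℝ) := by
      simp only [hsingle]
      refine Prod.ext ?_ ?_
      · rw [Prod.fst_add, Prod.fst_sum]
        simp [Finset.univ_sum_single, show ((fun _ => (0:ℝ)) : Fin m → ℝ) = 0 from rfl]
      · rw [Prod.snd_add, Prod.snd_sum]
        simp
    rw [hdecomp, map_add, map_sum, map_smul, smul_eq_mul]
    congr 1
    refine Finset.sum_congr rfl fun i _ => ?_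
    rw [map_smul, smul_eq_mul]
  have hfx : f (((fun _ => 0) : Fin m → ℝ), OPT pd) = OPT pd * κ := by
    rw [hf_eq]; simp
  have hkey : ∀ (u : Fin m → ℝ) (r : ℝ), (((u, r) : (Fin m → ℝ) × ℝ)) ∈ A →
      (∑ i, u i * g i) + r * κ ≤ OPT pd * κ := by
    intro u r h
    have h1 := hfa_le _ h
    rwa [hf_eq, hfx] at h1
  have hOPTκ : 0 ≤ OPT pd * κ := by
    have h0 : ((((fun _ => 0) : Fin m → ℝ), (0:ℝ)) : (Fin m → ℝ) × ℝ) ∈ A := by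
      refine ⟨fun _ => 0, fun j => ⟨le_refl 0, zero_le_one⟩, fun i => ?_, ?_⟩
      · simp [(pd.hb_pos i).le]
      · simp [objective]
    have h1 := hkey _ _ h0
    simpa using h1
  have hκpos : 0 < κ := by
    rcases lt_or_ge 0 κ with h | hκle
    · exact h
    rcases eq_or_lt_of_le hκle with heq | hlt
    · -- κ = 0 contradicts strict separation at z0
      exfalso
      have h1 := hf _ hz0
      have e1 : f ((((fun _ => 0) : Fin m → ℝ), (-1:ℝ)) : (Fin m → ℝ) × ℝ) = -κ := by
        rw [hf_eq]; simp
      rw [e1, hfx] at h1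
      simp [heq] at h1
    · -- κ < 0 impossible
      exfalso
      set s : ℝ := OPT pd * κ / (-κ) + 1 with hs_def
      have hs0 : 0 ≤ s := by
        have := div_nonneg hOPTκ (by linarith : (0:ℝ) ≤ -κ)
        rw [hs_def]; linarith
      have hmem : ((((fun _ => 0) : Fin m → ℝ), -s) : (Fin m → ℝ) × ℝ) ∈ A := by
        refine ⟨fun _ => 0, fun j => ⟨le_refl 0, zero_le_one⟩, fun i => ?_, ?_⟩
        · simp [(pd.hb_pos i).le]
        · simp only []
          have : objective pd pd.p (fun _ => 0) = 0 := by simp [objective]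
          rw [this]; linarith
      have hk := hkey _ _ hmem
      have e0 : ∑ i, (fun _ => (0:ℝ)) i * g i = 0 := by simp
      rw [e0, zero_add] at hk
      have hd : OPT pd * κ / (-κ) * (-κ) = OPT pd * κ :=
        div_mul_cancel₀ _ (ne_of_gt (by linarith : (0:ℝ) < -κ))
      have e : -s * κ = OPT pd * κ - κ := by
        rw [hs_def]; linear_combination hd
      linarith
  have hsingle_mem : ∀ (i : Fin m) (s : ℝ), 0 ≤ s →
      (((Pi.single i s : Fin m → ℝ), (0:ℝ)) : (Fin m → ℝ) × ℝ) ∈ A := by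
    intro i s hs
    refine ⟨fun _ => 0, fun j => ⟨le_refl 0, zero_le_one⟩, fun i' => ?_, ?_⟩
    · have h1 : (0:ℝ) ≤ (Pi.single i s : Fin m → ℝ) i' := by
        rcases eq_or_ne i' i with rfl | hne
        · simpa using hs
        · rw [Pi.single_eq_of_ne hne]
      have := pd.hb_pos i'
      have hz : ∑ j, pd.p j * (fun _ => (0:ℝ)) j * pd.c j i' = 0 := by simp
      simp only []
      rw [hz]
      linarith
    · simp [objective]
  have hsum_single : ∀ (i : Fin m) (s : ℝ),
      ∑ i', (Pi.single i s : Fin m → ℝ) i' * g i' = s * g i := by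
    intro i s
    rw [Finset.sum_eq_single i]
    · simp
    · intro i' _ hne
      rw [Pi.single_eq_of_ne hne, zero_mul]
    · intro h; exact absurd (Finset.mem_univ i) h
  have hg_le : ∀ i, g i ≤ 0 := by
    intro i
    by_contra hpos
    push_neg at hpos
    set s : ℝ := OPT pd * κ / g i + 1 with hs_def
    have hs0 : 0 ≤ s := by
      have := div_nonneg hOPTκ hpos.le
      rw [hs_def]; linarith
    have hk := hkey _ _ (hsingle_mem i s hs0)
    rw [hsum_single, zero_mul, add_zero] at hk
    have hd : OPT pd * κ / g i * g i = OPT pd * κ := div_mul_cancel₀ _ hpos.ne'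
    have e : s * g i = OPT pd * κ + g i := by
      rw [hs_def]; linear_combination hd
    linarith
  set lam : Fin m → ℝ := fun i => -g i / κ with hlam_def
  have hlam_nn : ∀ i, 0 ≤ lam i := fun i =>
    div_nonneg (neg_nonneg.mpr (hg_le i)) hκpos.le
  set ystar : Fin n → ℝ :=
    fun j => if 0 ≤ pd.μ j - ∑ i, pd.c j i * lam i then 1 else 0 with hy_def
  have hy01 : ∀ j, 0 ≤ ystar j ∧ ystar j ≤ 1 := by
    intro j; rw [hy_def]; dsimp only; split_ifs <;> norm_num
  set S : Fin m → ℝ := fun i => ∑ j, pd.p j * ystar j * pd.c j i with hS_def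
  have hmemy : (((fun i => S i - pd.b i), objective pd pd.p ystar) :
      (Fin m → ℝ) × ℝ) ∈ A := by
    refine ⟨ystar, hy01, fun i => ?_, le_refl _⟩
    simp only []
    have e : pd.b i + (S i - pd.b i) = S i := by ring
    rw [e, hS_def]
  have hkeyy := hkey _ _ hmemy
  have hobj_le : objective pd pd.p ystar ≤ OPT pd + ∑ i, (S i - pd.b i) * lam i := by
    have hsum : ∑ i, (S i - pd.b i) * lam i = (∑ i, (S i - pd.b i) * (-(g i))) / κ := by
      rw [Finset.sum_div]
      refine Finset.sum_congr rfl fun i _ => ?_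
      rw [hlam_def]
      dsimp only
      ring
    have hneg : ∑ i, (S i - pd.b i) * (-(g i)) = -(∑ i, (S i - pd.b i) * g i) := by
      rw [← Finset.sum_neg_distrib]
      exact Finset.sum_congr rfl fun i _ => by ring
    rw [hsum, hneg]
    have h2 : (objective pd pd.p ystar - OPT pd) * κ ≤ -(∑ i, (S i - pd.b i) * g i) := by
      linarith
    have h3 := (le_div_iff₀ hκpos).mpr h2
    linarith
  have hmax : ∀ j, pd.p j * max (pd.μ j - ∑ i, pd.c j i * lam i) 0
      = pd.p j * pd.μ j * ystar j - pd.p j * (ystar j * ∑ i, pd.c j i * lam i) := by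
    intro j
    rw [hy_def]
    dsimp only
    split_ifs with h
    · rw [max_eq_left h]; ring
    · rw [max_eq_right (le_of_lt (lt_of_not_ge h))]; ring
  have hswap := sum_swap_id pd ystar lam
  have hdual_le : dualObj pd pd.p pd.b lam ≤ OPT pd := by
    have e1 : ∑ j, pd.p j * max (pd.μ j - ∑ i, pd.c j i * lam i) 0
        = objective pd pd.p ystar - ∑ i, S i * lam i := by
      have e1a := Finset.sum_congr rfl (fun j (_ : j ∈ Finset.univ) => hmax j)
      rw [e1a, Finset.sum_sub_distrib]
      congr 1
      rw [← hswap]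
    unfold dualObj
    rw [e1]
    have e2 : ∑ i, (S i - pd.b i) * lam i = ∑ i, S i * lam i - ∑ i, pd.b i * lam i := by
      rw [← Finset.sum_sub_distrib]
      exact Finset.sum_congr rfl fun i _ => by ring
    linarith [hobj_le, e2.le, e2.ge]
  exact ⟨⟨lam, hlam_nn, le_antisymm (hle_dual lam hlam_nn) hdual_le⟩,
    by rintro v ⟨lam', hlam', rfl⟩; exact hle_dual lam' hlam'⟩


end FairOnline
end
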